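/- arXiv:0904.3083 — 2 statements merged into one kernel-verified Lean document; each statement's English description precedes it below -/
import Mathlib

section
/- Let κ ∈ (0,1), set b(κ) := √((1−κ)/κ), c(κ) := κ^{κ/2}(1−κ)^{(1−κ)/2}, and define ζ_κ : ℝ → ℝ by ζ_κ(y) = 1/√(1+y²) if |y| < b(κ) and ζ_κ(y) = c(κ)/|y|^{1−κ} if |y| ≥ b(κ). Then for every y ∈ ℝ and every t ∈ ℝ with |t| ≥ 1 one has |t|^κ/√(t²+y²) ≤ ζ_κ(y). -/
/-!
Squaring, with `u = t² ≥ 1` and `v = y²`, the claim becomes `u^κ ≤ ζ(y)² (u + v)`.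
For small `|y|` this follows from the weighted AM-GM bound `u^κ ≤ κ u + (1 - κ)`, since
`(κ u + 1 - κ)(1 + v) ≤ u + v` is equivalent to `(u - 1)(1 - κ - κ v) ≥ 0`.
For large `|y|` it is weighted AM-GM applied to `u / κ` and `v / (1 - κ)`.
-/

open Real

lemma div_sqrt_le_of_sq_le_mul {a z w : ℝ} (hz : 0 ≤ z) (h : a ^ 2 ≤ z ^ 2 * w) :
    a / √w ≤ z := by
  rcases (sqrt_nonneg w).eq_or_lt with hw | hw
  · rwa [← hw, div_zero]
  rw [div_le_iff₀ hw]
  calc a ≤ |a| := le_abs_self a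
    _ = √(a ^ 2) := (sqrt_sq_eq_abs a).symm
    _ ≤ √(z ^ 2 * w) := sqrt_le_sqrt h
    _ = z * √w := by rw [sqrt_mul (sq_nonneg z), sqrt_sq hz]

lemma sq_abs_rpow (x p : ℝ) : (|x| ^ p) ^ 2 = (x ^ 2) ^ p := by
  rw [rpow_pow_comm (abs_nonneg x), sq_abs]

lemma sq_rpow_half {x : ℝ} (hx : 0 ≤ x) (p : ℝ) : (x ^ (p / 2)) ^ 2 = x ^ p := by
  rw [← rpow_mul_natCast hx]
  norm_num

lemma rpow_mul_one_add_le {κ u v : ℝ} (hκ₀ : 0 ≤ κ) (hκ₁ : κ ≤ 1) (hu : 1 ≤ u) (hv : 0 ≤ v)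
    (hκv : κ * v ≤ 1 - κ) : u ^ κ * (1 + v) ≤ u + v := by
  have amgm : u ^ κ ≤ κ * u + (1 - κ) := by
    simpa using geom_mean_le_arith_mean2_weighted hκ₀ (sub_nonneg.2 hκ₁) (by linarith) zero_le_one
      (add_sub_cancel κ 1)
  calc u ^ κ * (1 + v) ≤ (κ * u + (1 - κ)) * (1 + v) := by gcongr
    _ ≤ u + v := by nlinarith [mul_nonneg (sub_nonneg.2 hu) (sub_nonneg.2 hκv)]

lemma rpow_mul_rpow_le_mul_add {w₁ w₂ u v : ℝ} (hw₁ : 0 < w₁) (hw₂ : 0 < w₂) (hw : w₁ + w₂ = 1)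
    (hu : 0 ≤ u) (hv : 0 ≤ v) : u ^ w₁ * v ^ w₂ ≤ w₁ ^ w₁ * w₂ ^ w₂ * (u + v) := by
  have amgm := geom_mean_le_arith_mean2_weighted hw₁.le hw₂.le (div_nonneg hu hw₁.le)
    (div_nonneg hv hw₂.le) hw
  rw [div_rpow hu hw₁.le, div_rpow hv hw₂.le, mul_div_cancel₀ _ hw₁.ne',
    mul_div_cancel₀ _ hw₂.ne', div_mul_div_comm, div_le_iff₀ (by positivity)] at amgm
  linarith

/-- For `κ ∈ (0,1)`, with `b(κ) = √((1-κ)/κ)`, `c(κ) = κ^(κ/2)(1-κ)^((1-κ)/2)` and the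
piecewise majorant `ζ_κ`, one has `|t|^κ / √(t² + y²) ≤ ζ_κ(y)` for all `y ∈ ℝ` and `|t| ≥ 1`. -/
theorem stmt0 (κ : ℝ) (hκ : κ ∈ Set.Ioo (0 : ℝ) 1)
    (b c : ℝ)
    (hb : b = Real.sqrt ((1 - κ) / κ))
    (hc : c = κ ^ (κ / 2) * (1 - κ) ^ ((1 - κ) / 2))
    (ζ : ℝ → ℝ)
    (hζ : ∀ y : ℝ, ζ y = if |y| < b then 1 / Real.sqrt (1 + y ^ 2)
      else c / |y| ^ (1 - κ))
    (y t : ℝ) (ht : 1 ≤ |t|) :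
    |t| ^ κ / Real.sqrt (t ^ 2 + y ^ 2) ≤ ζ y := by
  obtain ⟨hκ₀, hκ₁⟩ := hκ
  have hκ₁' : 0 < 1 - κ := sub_pos.2 hκ₁
  have ht2 : 1 ≤ t ^ 2 := by nlinarith [sq_abs t]
  rw [hζ]
  split_ifs with hy
  · have hκy : κ * y ^ 2 ≤ 1 - κ := by
      rw [hb, lt_sqrt (abs_nonneg y), sq_abs, lt_div_iff₀ hκ₀] at hy
      linarith
    apply div_sqrt_le_of_sq_le_mul (by positivity)
    rw [sq_abs_rpow, div_pow, one_pow, sq_sqrt (by positivity), one_div_mul_eq_div,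
      le_div_iff₀ (by positivity)]
    exact rpow_mul_one_add_le hκ₀.le hκ₁.le ht2 (sq_nonneg y) hκy
  · have hy0 : 0 < |y| := lt_of_lt_of_le (by rw [hb]; positivity) (not_lt.1 hy)
    apply div_sqrt_le_of_sq_le_mul (by rw [hc]; positivity)
    have hy2 : 0 < (y ^ 2) ^ (1 - κ) := rpow_pos_of_pos (by rw [← sq_abs]; positivity) _
    rw [sq_abs_rpow, div_pow, sq_abs_rpow, hc, mul_pow, sq_rpow_half hκ₀.le,
      sq_rpow_half hκ₁'.le, div_mul_eq_mul_div, le_div_iff₀ hy2]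
    exact rpow_mul_rpow_le_mul_add hκ₀ hκ₁' (add_sub_cancel κ 1) (sq_nonneg t) (sq_nonneg y)
end

section
/- Let ν > 0, E > 0, ω ≥ 0, and define w_ν(ω,E) := E^{1/2−ν}·((E+ω)^{ν+1/2} − E^ν·(E+ω)^{1/2}). Then for every t ≥ 0 one has ((t+E)^{−ν} − (t+E+ω)^{−ν})·(t+E+ω)^{ν+1/2} ≤ w_ν(ω,E)/√E. -/
/-!
Both sides are values of `g(s) = √(s+ω) (((s+ω)/s)^ν - 1)`, at `s = t + E` and at `s = E`, so it
suffices that `g` is antitone on `(0, ∞)`. With `r = ((s+ω)/s)^ν` one finds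
`2 √(s+ω) g'(s) = r (1 - 2νω/s) - 1`, and `r (1 - νω/s) ≤ 1` follows from `log (1 + x) ≤ x` and
`1 - y ≤ exp (-y)`.
-/

open Real Set

noncomputable def powerGap (ν ω s : ℝ) : ℝ :=
  √(s + ω) * (exp (ν * (log (s + ω) - log s)) - 1)

theorem exp_mul_mul_one_sub_mul_le_one {ν L x : ℝ} (hν : 0 ≤ ν) (hL : L ≤ x) :
    exp (ν * L) * (1 - ν * x) ≤ 1 := by
  have h : 1 - ν * x ≤ exp (-(ν * L)) := by
    nlinarith [add_one_le_exp (-(ν * L)), mul_le_mul_of_nonneg_left hL hν]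
  calc exp (ν * L) * (1 - ν * x) ≤ exp (ν * L) * exp (-(ν * L)) := by gcongr
    _ = 1 := by rw [← exp_add, add_neg_cancel, exp_zero]

section
variable {ν ω s : ℝ}

theorem log_add_sub_log_le_div (hs : 0 < s) (hq : 0 < s + ω) :
    log (s + ω) - log s ≤ ω / s := by
  rw [← log_div hq.ne' hs.ne']
  calc log ((s + ω) / s) ≤ (s + ω) / s - 1 := log_le_sub_one_of_pos (div_pos hq hs)
    _ = ω / s := by field_simp; ring

theorem rpow_sub_rpow_mul_rpow_eq_powerGap (hs : 0 < s) (hq : 0 < s + ω) :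
    (s ^ (-ν) - (s + ω) ^ (-ν)) * (s + ω) ^ (ν + 1 / 2) = powerGap ν ω s := by
  simp only [powerGap, sqrt_eq_rpow, rpow_def_of_pos hs, rpow_def_of_pos hq]
  simp only [mul_sub, sub_mul, mul_one, ← exp_add]
  congr 2 <;> ring

theorem weight_div_sqrt_eq_powerGap (hs : 0 < s) (hq : 0 < s + ω) :
    s ^ ((1 : ℝ) / 2 - ν) * ((s + ω) ^ (ν + 1 / 2) - s ^ ν * (s + ω) ^ ((1 : ℝ) / 2)) / √s
      = powerGap ν ω s := by
  simp only [powerGap, sqrt_eq_rpow, rpow_def_of_pos hs, rpow_def_of_pos hq]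
  rw [div_eq_iff (exp_pos _).ne']
  simp only [mul_sub, sub_mul, mul_one, ← exp_add]
  congr 2 <;> ring

theorem hasDerivAt_powerGap (hs : 0 < s) (hq : 0 < s + ω) :
    HasDerivAt (powerGap ν ω)
      ((exp (ν * (log (s + ω) - log s)) * (1 - 2 * ν * ω / s) - 1) / (2 * √(s + ω))) s := by
  have hlog : HasDerivAt (fun x => log (x + ω) - log x) ((s + ω)⁻¹ - s⁻¹) s :=
    ((((hasDerivAt_id' s).add_const ω).log hq.ne').sub (hasDerivAt_log hs.ne')).congr_deriv
      (by rw [one_div])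
  have hsqrt : HasDerivAt (fun x => √(x + ω)) (1 / (2 * √(s + ω))) s :=
    ((hasDerivAt_id' s).add_const ω).sqrt hq.ne'
  refine (hsqrt.mul ((hlog.const_mul ν).exp.sub_const 1)).congr_deriv ?_
  have hsq : √(s + ω) ^ 2 = s + ω := sq_sqrt hq.le
  have hsqrt_pos : 0 < √(s + ω) := sqrt_pos.mpr hq
  field_simp
  rw [hsq]
  ring

theorem antitoneOn_powerGap (hν : 0 ≤ ν) (hω : 0 ≤ ω) : AntitoneOn (powerGap ν ω) (Ioi 0) := by
  have hderiv : ∀ s ∈ Ioi (0 : ℝ), HasDerivAt (powerGap ν ω)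
      ((exp (ν * (log (s + ω) - log s)) * (1 - 2 * ν * ω / s) - 1) / (2 * √(s + ω))) s :=
    fun s hs => hasDerivAt_powerGap hs (by simp only [mem_Ioi] at hs; linarith)
  refine antitoneOn_of_hasDerivWithinAt_nonpos (convex_Ioi 0)
    (fun s hs => (hderiv s hs).continuousAt.continuousWithinAt)
    (fun s hs => (hderiv s (interior_subset hs)).hasDerivWithinAt) fun s hs => ?_
  rw [interior_Ioi, mem_Ioi] at hs
  set r := exp (ν * (log (s + ω) - log s))
  have hbound : r * (1 - ν * (ω / s)) ≤ 1 :=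
    exp_mul_mul_one_sub_mul_le_one hν (log_add_sub_log_le_div hs (by linarith))
  have hslack : 0 ≤ r * (ν * (ω / s)) := by positivity
  apply div_nonpos_of_nonpos_of_nonneg _ (by positivity)
  linarith [show r * (1 - 2 * ν * ω / s) = r * (1 - ν * (ω / s)) - r * (ν * (ω / s)) by ring]

end

/-- For `ν > 0`, `E > 0`, `ω ≥ 0` and `w_ν(ω,E) = E^(1/2-ν)((E+ω)^(ν+1/2) - E^ν (E+ω)^(1/2))`,
one has `((t+E)^(-ν) - (t+E+ω)^(-ν))·(t+E+ω)^(ν+1/2) ≤ w_ν(ω,E)/√E` for every `t ≥ 0`. -/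
theorem stmt3 (ν E ω : ℝ) (hν : 0 < ν) (hE : 0 < E) (hω : 0 ≤ ω)
    (w : ℝ)
    (hw : w = E ^ ((1 : ℝ) / 2 - ν) *
      ((E + ω) ^ (ν + 1 / 2) - E ^ ν * (E + ω) ^ ((1 : ℝ) / 2)))
    (t : ℝ) (ht : 0 ≤ t) :
    ((t + E) ^ (-ν) - (t + E + ω) ^ (-ν)) * (t + E + ω) ^ (ν + 1 / 2)
      ≤ w / Real.sqrt E := by
  rw [hw, weight_div_sqrt_eq_powerGap hE (by linarith),
    rpow_sub_rpow_mul_rpow_eq_powerGap (by linarith) (by linarith)]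
  exact antitoneOn_powerGap hν.le hω hE (mem_Ioi.mpr (by linarith)) (by linarith)
end
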